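/- arXiv:2601.07158 — 3 statements merged into one kernel-verified Lean document; each statement's English description precedes it below -/
import Mathlib

section
/- On the complete graph on N vertices, every skew-symmetric match-up function M admits a decomposition M = grad s + curl* Φ for some vertex function s and alternating triangular function Φ, and the two components M_grad = grad s and M_curl = curl* Φ are uniquely determined by M. -/
/-!
Write `div M i = ∑ k, M i k`. For `Φ` alternating, `curl* Φ` is divergence free, since
`∑ j, ∑ k, Φ i j k` vanishes by antisymmetry in `j, k`; hence `M = grad s + curl* Φ` forces
`N (s i - s j) = div M i - div M j`, which pins down `grad s`, and then `curl* Φ = M - grad s`.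
Conversely `s = div M / N` and `Φ i j k = (M i j + M j k + M k i) / N` give a decomposition, because
`∑ k, Φ i j k = M i j - (div M i - div M j) / N`.
-/

open Finset

namespace Hodge

variable {V : Type*}

theorem sum_sum_eq_zero_of_antisymm [Fintype V] {f : V → V → ℝ} (hf : ∀ j k, f j k = -f k j) :
    ∑ j, ∑ k, f j k = 0 := by
  have h : ∑ j, ∑ k, f j k = -∑ j, ∑ k, f j k :=
    calc ∑ j, ∑ k, f j k = ∑ j, ∑ k, -f k j := by simp only [← hf]
      _ = -∑ j, ∑ k, f j k := by rw [sum_comm]; simp only [sum_neg_distrib]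
  linarith

structure IsAlternating (Φ : V → V → V → ℝ) : Prop where
  rotate : ∀ i j k, Φ i j k = Φ j k i
  swap_left : ∀ i j k, Φ i j k = -Φ j i k

namespace IsAlternating

variable {Φ : V → V → V → ℝ}

theorem swap_right (hΦ : IsAlternating Φ) (i j k : V) : Φ i j k = -Φ i k j := by
  rw [hΦ.rotate i j k, hΦ.swap_left j k i, hΦ.rotate i k j]

theorem apply_right_right (hΦ : IsAlternating Φ) (i j : V) : Φ i j j = 0 := by
  linarith [hΦ.swap_right i j j]

theorem apply_left_right (hΦ : IsAlternating Φ) (i j : V) : Φ i j i = 0 := by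
  rw [hΦ.rotate, hΦ.apply_right_right]

end IsAlternating

variable [Fintype V]

noncomputable def triangleFlow (M : V → V → ℝ) (i j k : V) : ℝ :=
  (M i j + M j k + M k i) / Fintype.card V

variable {M : V → V → ℝ}

theorem isAlternating_triangleFlow (hM : ∀ i j, M i j = -M j i) :
    IsAlternating (triangleFlow M) where
  rotate i j k := by simp only [triangleFlow]; ring
  swap_left i j k := by simp only [triangleFlow]; rw [hM j i, hM k j, hM i k]; ring

theorem sum_triangleFlow (hM : ∀ i j, M i j = -M j i) (i j : V) :
    ∑ k, triangleFlow M i j k = M i j - ((∑ k, M i k) - ∑ k, M j k) / Fintype.card V := by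
  have hV : (Fintype.card V : ℝ) ≠ 0 := Nat.cast_ne_zero.mpr (Fintype.card_pos_iff.mpr ⟨i⟩).ne'
  have hcol : ∑ k, M k i = -∑ k, M i k := by simp only [hM _ i, sum_neg_distrib]
  simp only [triangleFlow, ← sum_div, sum_add_distrib, sum_const, card_univ, nsmul_eq_mul, hcol]
  field_simp
  ring

variable [DecidableEq V]

def curlStar (Φ : V → V → V → ℝ) (i j : V) : ℝ :=
  ∑ k ∈ univ.filter (fun k => k ≠ i ∧ k ≠ j), Φ i j k

theorem IsAlternating.curlStar_eq_sum {Φ : V → V → V → ℝ} (hΦ : IsAlternating Φ) (i j : V) :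
    curlStar Φ i j = ∑ k, Φ i j k := by
  refine sum_subset (subset_univ _) fun k _ hk => ?_
  rcases eq_or_ne k i with rfl | hki
  · exact hΦ.apply_left_right k j
  · obtain rfl : k = j := by simpa [hki] using hk
    exact hΦ.apply_right_right i k

theorem IsAlternating.sum_curlStar {Φ : V → V → V → ℝ} (hΦ : IsAlternating Φ) (i : V) :
    ∑ j, curlStar Φ i j = 0 := by
  simp only [hΦ.curlStar_eq_sum]
  exact sum_sum_eq_zero_of_antisymm (hΦ.swap_right i)

theorem grad_eq_of_eq_grad_add_curlStar {s : V → ℝ} {Φ : V → V → V → ℝ}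
    (hΦ : IsAlternating Φ) (hM : ∀ i j, M i j = (s i - s j) + curlStar Φ i j) (i j : V) :
    s i - s j = ((∑ k, M i k) - ∑ k, M j k) / Fintype.card V := by
  have hrow : ∀ i, ∑ k, M i k = Fintype.card V * s i - ∑ k, s k := fun i => by
    simp only [hM, sum_add_distrib, hΦ.sum_curlStar, sum_sub_distrib, sum_const, card_univ,
      nsmul_eq_mul, add_zero]
  have hV : (Fintype.card V : ℝ) ≠ 0 := Nat.cast_ne_zero.mpr (Fintype.card_pos_iff.mpr ⟨i⟩).ne'
  rw [hrow, hrow, eq_div_iff hV]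
  ring

theorem exists_eq_grad_add_curlStar (hM : ∀ i j, M i j = -M j i) :
    ∃ (s : V → ℝ) (Φ : V → V → V → ℝ), IsAlternating Φ ∧
      ∀ i j, M i j = (s i - s j) + curlStar Φ i j := by
  refine ⟨fun i => (∑ k, M i k) / Fintype.card V, triangleFlow M,
    isAlternating_triangleFlow hM, fun i j => ?_⟩
  rw [(isAlternating_triangleFlow hM).curlStar_eq_sum, sum_triangleFlow hM, sub_div]
  ring

end Hodge

open Hodge in
/-- Hodge decomposition of edge flows on the complete graph: every skew-symmetric
match-up function `M` admits a decomposition `M = grad s + curl* Φ` with `Φ`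
alternating, and the two components `grad s` and `curl* Φ` are uniquely
determined by `M`. -/
theorem hodge_decomposition {N : ℕ} (M : Fin N → Fin N → ℝ)
    (hskew : ∀ i j, M i j = -M j i) :
    (∃ (s : Fin N → ℝ) (Φ : Fin N → Fin N → Fin N → ℝ),
      (∀ i j k, Φ i j k = Φ j k i) ∧ (∀ i j k, Φ i j k = -Φ j i k) ∧
      ∀ i j, M i j = (s i - s j) + ∑ k ∈ univ.filter (fun k => k ≠ i ∧ k ≠ j), Φ i j k) ∧
    (∀ (s s' : Fin N → ℝ) (Φ Φ' : Fin N → Fin N → Fin N → ℝ),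
      (∀ i j k, Φ i j k = Φ j k i) → (∀ i j k, Φ i j k = -Φ j i k) →
      (∀ i j k, Φ' i j k = Φ' j k i) → (∀ i j k, Φ' i j k = -Φ' j i k) →
      (∀ i j, M i j = (s i - s j) + ∑ k ∈ univ.filter (fun k => k ≠ i ∧ k ≠ j), Φ i j k) →
      (∀ i j, M i j = (s' i - s' j) + ∑ k ∈ univ.filter (fun k => k ≠ i ∧ k ≠ j), Φ' i j k) →
      (∀ i j, s i - s j = s' i - s' j) ∧
      (∀ i j, ∑ k ∈ univ.filter (fun k => k ≠ i ∧ k ≠ j), Φ i j k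
            = ∑ k ∈ univ.filter (fun k => k ≠ i ∧ k ≠ j), Φ' i j k)) := by
  refine ⟨?_, fun s s' Φ Φ' hrot hswap hrot' hswap' hM hM' => ?_⟩
  · obtain ⟨s, Φ, hΦ, hdecomp⟩ := exists_eq_grad_add_curlStar hskew
    exact ⟨s, Φ, hΦ.rotate, hΦ.swap_left, hdecomp⟩
  have hgrad : ∀ i j, s i - s j = s' i - s' j := fun i j => by
    rw [grad_eq_of_eq_grad_add_curlStar ⟨hrot, hswap⟩ hM,
      grad_eq_of_eq_grad_add_curlStar ⟨hrot', hswap'⟩ hM']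
  exact ⟨hgrad, fun i j => by linarith [hM i j, hM' i j, hgrad i j]⟩
end

section
/- The Pólya-Gamma integral identity holds: for any real ψ, integer n ≥ 0, and real y, exp(yψ)/(1+exp(ψ))^n = 2^{-n} exp((y - n/2)ψ) ∫₀^∞ exp(-ωψ²/2) g(ω) dω, where g is the density of the Pólya-Gamma PG(n,0) distribution; equivalently, cosh(ψ/2)^{-n} = E[exp(-ωψ²/2)] for ω ~ PG(n,0). -/
/-!
The Laplace transform of a `Gamma(n, 1)` variable is `E[exp (-s g)] = (1 + s)^(-n)`, so by
independence `E[exp (-ω ψ²/2)]` is the limit of `∏_{k<N} (1 + (ψ/2)² / (π (k + 1/2))²)^(-n)`,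
which is `cosh (ψ/2)^(-n)` by the infinite product for `cosh`; the latter comes from Euler's sine
product through `sin 2z = 2 sin z cos z`. The limit may be taken under the integral by dominated
convergence, since the integrands are bounded by `1` and the series defining `ω` converges almost
surely, its terms having summable first moments. Finally `1 + e^ψ = 2 e^(ψ/2) cosh (ψ/2)`.
-/

open MeasureTheory ProbabilityTheory Real
open Filter Finset Topology

theorem Finset.prod_range_two_mul {M : Type*} [CommMonoid M] (f : ℕ → M) (n : ℕ) :
    ∏ j ∈ range (2 * n), f j = (∏ m ∈ range n, f (2 * m)) * ∏ m ∈ range n, f (2 * m + 1) := by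
  induction n with
  | zero => simp
  | succ n ih =>
    rw [Nat.mul_succ, prod_range_succ, prod_range_succ, ih, prod_range_succ, prod_range_succ]
    ac_rfl

theorem Complex.tendsto_euler_cos_prod {z : ℂ} (hz : Complex.sin (π * z) ≠ 0) :
    Tendsto (fun n : ℕ => ∏ k ∈ range n, (1 - z ^ 2 / ((k : ℂ) + 1 / 2) ^ 2)) atTop
      (𝓝 (Complex.cos (π * z))) := by
  set S : ℕ → ℂ := fun n => π * z * ∏ j ∈ range n, (1 - z ^ 2 / ((j : ℂ) + 1) ^ 2)
  have hS : Tendsto S atTop (𝓝 (Complex.sin (π * z))) := tendsto_euler_sin_prod z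
  have hS₂ := (tendsto_euler_sin_prod (2 * z)).comp
    (tendsto_id.const_mul_atTop' two_pos : Tendsto (fun n : ℕ => 2 * n) atTop atTop)
  -- the even-indexed factors of the sine product for `2z` form the cosine product for `z`,
  -- the odd-indexed ones the sine product for `z`
  have hsplit : ∀ n, (π * (2 * z) * ∏ j ∈ range (2 * n), (1 - (2 * z) ^ 2 / ((j : ℂ) + 1) ^ 2))
      = 2 * S n * ∏ k ∈ range n, (1 - z ^ 2 / ((k : ℂ) + 1 / 2) ^ 2) := by
    intro n
    rw [prod_range_two_mul]
    have heven : ∀ m : ℕ, 1 - (2 * z) ^ 2 / (((2 * m : ℕ) : ℂ) + 1) ^ 2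
        = 1 - z ^ 2 / ((m : ℂ) + 1 / 2) ^ 2 := fun m => by
      push_cast; field_simp
    have hodd : ∀ m : ℕ, 1 - (2 * z) ^ 2 / (((2 * m + 1 : ℕ) : ℂ) + 1) ^ 2
        = 1 - z ^ 2 / ((m : ℂ) + 1) ^ 2 := fun m => by
      rw [show ((2 * m + 1 : ℕ) : ℂ) + 1 = 2 * ((m : ℂ) + 1) by push_cast; ring, mul_pow, mul_pow,
        mul_div_mul_left _ _ (by norm_num)]
    simp only [heven, hodd, S]
    ring
  have hlim : Tendsto (fun n => (2 * S n)⁻¹ * (π * (2 * z) *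
      ∏ j ∈ range (2 * n), (1 - (2 * z) ^ 2 / ((j : ℂ) + 1) ^ 2))) atTop
      (𝓝 ((2 * Complex.sin (π * z))⁻¹ * Complex.sin (π * (2 * z)))) :=
    ((hS.const_mul 2).inv₀ (mul_ne_zero two_ne_zero hz)).mul hS₂
  have hval : (2 * Complex.sin (π * z))⁻¹ * Complex.sin (π * (2 * z)) = Complex.cos (π * z) := by
    rw [show π * (2 * z) = 2 * (π * z) by ring, Complex.sin_two_mul,
      inv_mul_cancel_left₀ (mul_ne_zero two_ne_zero hz)]
  rw [hval] at hlim
  refine hlim.congr' ?_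
  filter_upwards [hS.eventually_ne hz] with n hn
  rw [hsplit, inv_mul_cancel_left₀ (mul_ne_zero two_ne_zero hn)]

theorem Real.tendsto_euler_cosh_prod (x : ℝ) :
    Tendsto (fun n : ℕ => ∏ k ∈ range n, (1 + x ^ 2 / (π * ((k : ℝ) + 1 / 2)) ^ 2)) atTop
      (𝓝 (cosh x)) := by
  rcases eq_or_ne x 0 with rfl | hx
  · simp
  have hπx : (π : ℂ) * (Complex.I * x / π) = x * Complex.I := by
    field_simp [Complex.ofReal_ne_zero.2 pi_ne_zero]
  have hsin : Complex.sin (π * (Complex.I * x / π)) ≠ 0 := by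
    rw [hπx, Complex.sin_mul_I, ← Complex.ofReal_sinh]
    exact mul_ne_zero (Complex.ofReal_ne_zero.2 (sinh_ne_zero.2 hx)) Complex.I_ne_zero
  rw [← tendsto_ofReal_iff]
  convert Complex.tendsto_euler_cos_prod hsin using 2 with n
  · push_cast
    refine prod_congr rfl fun k _ => ?_
    field_simp [Complex.ofReal_ne_zero.2 pi_ne_zero]
    rw [Complex.I_sq]; ring
  · rw [hπx, Complex.cos_mul_I, Complex.ofReal_cosh]

namespace ProbabilityTheory

variable {a r t : ℝ}

@[fun_prop]
lemma measurable_gammaPDF (a r : ℝ) : Measurable (gammaPDF a r) :=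
  (measurable_gammaPDFReal a r).ennreal_ofReal

lemma gammaPDFReal_mul_exp (hr : 0 ≤ r) (ht : t < r) (x : ℝ) :
    gammaPDFReal a r x * exp (t * x) = (r / (r - t)) ^ a * gammaPDFReal a (r - t) x := by
  have hrt : 0 < r - t := sub_pos.2 ht
  unfold gammaPDFReal
  split_ifs
  · rw [← div_mul_cancel₀ r hrt.ne', mul_rpow (div_nonneg hr hrt.le) hrt.le,
      div_mul_cancel₀ r hrt.ne']
    have : exp (-(r * x)) * exp (t * x) = exp (-((r - t) * x)) := by
      rw [← exp_add]; ring_nf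
    rw [mul_assoc, this]
    ring
  · simp

lemma lintegral_exp_mul_gammaMeasure (ha : 0 < a) (hr : 0 ≤ r) (ht : t < r) :
    ∫⁻ x, ENNReal.ofReal (exp (t * x)) ∂gammaMeasure a r = ENNReal.ofReal ((r / (r - t)) ^ a) := by
  have hrt : 0 < r - t := sub_pos.2 ht
  rw [gammaMeasure, lintegral_withDensity_eq_lintegral_mul₀ (by fun_prop) (by fun_prop)]
  calc ∫⁻ x, gammaPDF a r x * ENNReal.ofReal (exp (t * x))
      = ∫⁻ x, ENNReal.ofReal ((r / (r - t)) ^ a) * gammaPDF a (r - t) x := by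
        refine lintegral_congr fun x => ?_
        rw [gammaPDF, gammaPDF, ← ENNReal.ofReal_mul' (exp_pos _).le, gammaPDFReal_mul_exp hr ht,
          ENNReal.ofReal_mul (by positivity)]
    _ = _ := by rw [lintegral_const_mul _ (by fun_prop), lintegral_gammaPDF_eq_one ha hrt, mul_one]

lemma integrable_exp_mul_gammaMeasure (ha : 0 < a) (hr : 0 ≤ r) (ht : t < r) :
    Integrable (fun x => exp (t * x)) (gammaMeasure a r) := by
  refine ⟨by fun_prop, ?_⟩
  simp only [HasFiniteIntegral, Real.enorm_eq_ofReal (exp_pos _).le]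
  rw [lintegral_exp_mul_gammaMeasure ha hr ht]
  exact ENNReal.ofReal_lt_top

lemma mgf_id_gammaMeasure (ha : 0 < a) (hr : 0 ≤ r) (ht : t < r) :
    mgf id (gammaMeasure a r) t = (r / (r - t)) ^ a := by
  rw [mgf, integral_eq_lintegral_of_nonneg_ae (ae_of_all _ fun x => (exp_pos _).le)
    (by fun_prop)]
  simp only [id, lintegral_exp_mul_gammaMeasure ha hr ht]
  exact ENNReal.toReal_ofReal (by positivity)

lemma integrable_id_gammaMeasure (ha : 0 < a) (hr : 0 < r) : Integrable id (gammaMeasure a r) := by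
  refine integrable_of_mem_interior_integrableExpSet
    (mem_interior.2 ⟨Set.Iio r, fun t ht => ?_, isOpen_Iio, hr⟩)
  exact integrable_exp_mul_gammaMeasure ha hr.le ht

lemma ae_nonneg_gammaMeasure : ∀ᵐ x ∂gammaMeasure a r, 0 ≤ x := by
  rw [ae_iff, show {x : ℝ | ¬0 ≤ x} = Set.Iio 0 by ext; simp, gammaMeasure,
    withDensity_apply _ measurableSet_Iio, lintegral_gammaPDF_of_nonpos le_rfl]

lemma gammaMeasure_zero_left : gammaMeasure 0 r = 0 := by
  -- the density carries the factor `1 / Γ 0`, and `Γ 0 = 0` in Mathlib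
  have : gammaPDF 0 r = 0 := by
    ext x
    simp [gammaPDF_eq]
  rw [gammaMeasure, this, withDensity_zero]

lemma natCast_pos_of_isProbabilityMeasure_gammaMeasure {n : ℕ}
    (h : IsProbabilityMeasure (gammaMeasure n r)) : (0 : ℝ) < n := by
  rcases n.eq_zero_or_pos with rfl | hn
  · rw [Nat.cast_zero, gammaMeasure_zero_left] at h
    exact absurd rfl h.ne_zero
  · exact_mod_cast hn

section Independent

variable {Ω : Type*} [MeasurableSpace Ω] {μ : Measure Ω}

lemma mgf_const_mul_of_map_eq_gammaMeasure {Y : Ω → ℝ} (hY : AEMeasurable Y μ)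
    (hlaw : μ.map Y = gammaMeasure a 1) (ha : 0 < a) {c : ℝ} (hct : c * t < 1) :
    mgf (fun x => c * Y x) μ t = (1 - c * t) ^ (-a) := by
  rw [mgf_const_mul, ← mgf_id_map hY, hlaw, mgf_id_gammaMeasure ha zero_le_one hct, one_div,
    inv_rpow (by linarith), rpow_neg (by linarith)]

lemma ae_summable_mul_of_map_eq {g : ℕ → Ω → ℝ} {ν : Measure ℝ} (hmeas : ∀ k, AEMeasurable (g k) μ)
    (hdist : ∀ k, μ.map (g k) = ν) (hν : Integrable id ν) {w : ℕ → ℝ} (hw : Summable w) :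
    ∀ᵐ x ∂μ, Summable fun k => w k * g k x := by
  have hnorm : ∀ k, eLpNorm (w k • g k) 1 μ = ‖w k‖ₑ * eLpNorm id 1 ν := fun k => by
    rw [eLpNorm_const_smul, ← hdist k, eLpNorm_map_measure (by rw [hdist k]; fun_prop) (hmeas k)]
    rfl
  have hfin : ∑' k, eLpNorm (w k • g k) 1 μ ≠ ⊤ := by
    simp only [hnorm, ENNReal.tsum_mul_right]
    exact ENNReal.mul_ne_top (tsum_enorm_ne_top_iff_summable_norm.2 hw.norm)
      (memLp_one_iff_integrable.2 hν).eLpNorm_ne_top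
  filter_upwards [summable_norm_of_tsum_eLpNorm_ne_top le_rfl
    (fun k => ((hmeas k).const_smul (w k)).aestronglyMeasurable) hfin] with x hx
  exact hx.of_norm

lemma iIndepFun.tendsto_prod_mgf {X : ℕ → Ω → ℝ} (hindep : iIndepFun X μ)
    (hmeas : ∀ k, Measurable (X k)) (hnonneg : ∀ k, ∀ᵐ x ∂μ, 0 ≤ X k x)
    (hsum : ∀ᵐ x ∂μ, Summable fun k => X k x) {t : ℝ} (ht : t ≤ 0) :
    Tendsto (fun n => ∏ k ∈ range n, mgf (X k) μ t) atTop
      (𝓝 (mgf (fun x => ∑' k, X k x) μ t)) := by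
  have := hindep.isProbabilityMeasure
  simp_rw [← hindep.mgf_sum hmeas, mgf, Finset.sum_apply]
  refine tendsto_integral_of_dominated_convergence (fun _ => 1) (fun n => by fun_prop)
    (integrable_const 1) (fun n => ?_) ?_
  · filter_upwards [ae_all_iff.2 hnonneg] with x hx
    rw [norm_of_nonneg (exp_pos _).le, exp_le_one_iff]
    exact mul_nonpos_of_nonpos_of_nonneg ht (sum_nonneg fun k _ => hx k)
  · filter_upwards [hsum] with x hx
    exact (continuous_exp.tendsto _).comp ((hx.hasSum.tendsto_sum_nat).const_mul t)

end Independent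

end ProbabilityTheory

theorem integral_exp_neg_mul_eq_cosh_rpow {Ω : Type*} [MeasurableSpace Ω] (P : Measure Ω)
    {a : ℝ} (ha : 0 < a) (g : ℕ → Ω → ℝ) (hmeas : ∀ k, Measurable (g k))
    (hindep : iIndepFun g P) (hdist : ∀ k, P.map (g k) = gammaMeasure a 1) (ω : Ω → ℝ)
    (hω : ∀ x, ω x = 1 / (2 * π ^ 2) * ∑' k : ℕ, g k x / ((k : ℝ) + 1 / 2) ^ 2) (ψ : ℝ) :
    ∫ x, exp (-(ω x) * ψ ^ 2 / 2) ∂P = cosh (ψ / 2) ^ (-a) := by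
  set w : ℕ → ℝ := fun k => 1 / (2 * π ^ 2) / ((k : ℝ) + 1 / 2) ^ 2
  have hω' : ω = fun x => ∑' k, w k * g k x := by
    funext x
    rw [hω, ← tsum_mul_left]
    congr with k
    ring
  have hw : Summable w := by
    refine (((summable_one_div_nat_add_rpow (1 / 2) 2).2 one_lt_two).mul_left
      (1 / (2 * π ^ 2))).congr fun k => ?_
    rw [abs_of_pos (by positivity), rpow_two, mul_one_div]
  have hψ : -(ψ ^ 2 / 2) ≤ 0 := by nlinarith [sq_nonneg ψ]
  have hindep' : iIndepFun (fun k x => w k * g k x) P :=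
    hindep.comp (fun k z => w k * z) fun k => measurable_const_mul (w k)
  have hlim := hindep'.tendsto_prod_mgf (fun k => (hmeas k).const_mul (w k))
    (fun k => (ae_of_ae_map (hmeas k).aemeasurable ((hdist k).symm ▸ ae_nonneg_gammaMeasure)).mono
      fun x hx => mul_nonneg (by positivity) hx)
    (ae_summable_mul_of_map_eq (fun k => (hmeas k).aemeasurable) hdist
      (integrable_id_gammaMeasure ha one_pos) hw) hψ
  have hfactor : ∀ k : ℕ, mgf (fun x => w k * g k x) P (-(ψ ^ 2 / 2))
      = (1 + (ψ / 2) ^ 2 / (π * ((k : ℝ) + 1 / 2)) ^ 2) ^ (-a) := by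
    intro k
    rw [mgf_const_mul_of_map_eq_gammaMeasure (hmeas k).aemeasurable (hdist k) ha
      ((mul_nonpos_of_nonneg_of_nonpos (by positivity) hψ).trans_lt one_pos)]
    congr 1
    simp only [w]
    field_simp
    ring
  simp only [hfactor, ← hω'] at hlim
  refine tendsto_nhds_unique ?_
    ((tendsto_euler_cosh_prod (ψ / 2)).rpow_const (Or.inl (cosh_pos _).ne'))
  convert hlim using 2 with N
  · rw [← finsetProd_rpow _ _ fun k _ => by positivity]
  · rw [mgf]
    congr 1 with x
    congr 1
    ring

lemma one_add_exp_eq_two_mul_exp_mul_cosh (x : ℝ) :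
    1 + exp x = 2 * exp (x / 2) * cosh (x / 2) := by
  have h₁ : exp (x / 2) * exp (x / 2) = exp x := by rw [← exp_add, add_halves]
  have h₂ : exp (x / 2) * exp (-(x / 2)) = 1 := by rw [← exp_add, add_neg_cancel, exp_zero]
  rw [cosh_eq]
  linear_combination -h₁ - h₂

lemma exp_mul_div_one_add_exp_pow (y ψ : ℝ) (n : ℕ) :
    exp (y * ψ) / (1 + exp ψ) ^ n
      = 2 ^ (-(n : ℝ)) * exp ((y - n / 2) * ψ) * (cosh (ψ / 2) ^ n)⁻¹ := by
  have hsplit : exp (y * ψ) = exp ((y - n / 2) * ψ) * exp (ψ / 2) ^ n := by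
    rw [← exp_nat_mul, ← exp_add]; ring_nf
  rw [one_add_exp_eq_two_mul_exp_mul_cosh, hsplit, rpow_neg zero_le_two, rpow_natCast, mul_pow,
    mul_pow]
  have := cosh_pos (ψ / 2)
  field_simp

/-- The Pólya-Gamma integral identity: if `ω = (1/(2π²)) ∑_{k≥1} g_k/((k-1/2)²)`
with `g_k` i.i.d. `Gamma(n,1)` random variables (so `ω ~ PG(n,0)`), then for any
real `ψ` and `y`,
`exp(yψ)/(1+exp ψ)^n = 2^{-n} exp((y - n/2)ψ) E[exp(-ω ψ²/2)]`. -/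
theorem polyaGamma_identity {Ω : Type*} [MeasurableSpace Ω]
    (P : Measure Ω) [IsProbabilityMeasure P] (n : ℕ)
    (g : ℕ → Ω → ℝ)
    (hmeas : ∀ k, Measurable (g k))
    (hindep : iIndepFun g P)
    (hdist : ∀ k, P.map (g k) = gammaMeasure (n : ℝ) 1)
    (ω : Ω → ℝ)
    (hω : ∀ x, ω x = (1 / (2 * π ^ 2)) *
        ∑' k : ℕ, g k x / ((k : ℝ) + 1 / 2) ^ 2)
    (ψ y : ℝ) :
    Real.exp (y * ψ) / (1 + Real.exp ψ) ^ n
      = 2 ^ (-(n : ℝ)) * Real.exp ((y - n / 2) * ψ)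
          * ∫ x, Real.exp (-(ω x) * ψ ^ 2 / 2) ∂P := by
  have hn : (0 : ℝ) < n := natCast_pos_of_isProbabilityMeasure_gammaMeasure
    (hdist 0 ▸ Measure.isProbabilityMeasure_map (hmeas 0).aemeasurable)
  rw [integral_exp_neg_mul_eq_cosh_rpow P hn g hmeas hindep hdist ω hω ψ,
    rpow_neg (cosh_pos _).le, rpow_natCast, exp_mul_div_one_add_exp_pow]
end

section
/- The Horseshoe hierarchical representation: if λ² | ν ~ InverseGamma(1/2, 1/ν) and ν ~ InverseGamma(1/2, 1), then the marginal distribution of λ = √(λ²) is the standard half-Cauchy distribution C⁺(0,1), with density 2/(π(1+λ²)) on λ > 0. -/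
open MeasureTheory Real

/-- Density of the inverse-gamma distribution with shape `a` and scale `b`:
`b^a / Γ(a) * x^(-a-1) * exp (-b/x)` (for `x > 0`). -/
noncomputable def invGammaPDF (a b x : ℝ) : ℝ :=
  b ^ a / Real.Gamma a * x ^ (-a - 1) * Real.exp (-b / x)

/-- The Horseshoe hierarchical representation: if `λ² | ν ~ InvGamma(1/2, 1/ν)`
and `ν ~ InvGamma(1/2, 1)`, then the marginal density of `λ = √(λ²)` is the
standard half-Cauchy `C⁺(0,1)` density `2/(π(1+λ²))`. The conditional density of
`λ` at `l > 0` is `2l · f_{IG(1/2,1/ν)}(l²)` by change of variables. -/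
theorem horseshoe_halfCauchy_marginal (l : ℝ) (hl : 0 < l) :
    ∫ ν in Set.Ioi (0 : ℝ),
        (2 * l * invGammaPDF (1 / 2) (1 / ν) (l ^ 2)) * invGammaPDF (1 / 2) 1 ν
      = 2 / (π * (1 + l ^ 2)) := by
  set c : ℝ := 1 + 1 / l ^ 2 with hc_def
  have hl2 : (0:ℝ) < l ^ 2 := by positivity
  have hc : 0 < c := by positivity
  have hπ : (0:ℝ) < π := pi_pos
  have key : ∫ ν in Set.Ioi (0:ℝ),
      (2 * l * invGammaPDF (1 / 2) (1 / ν) (l ^ 2)) * invGammaPDF (1 / 2) 1 ν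
      = ∫ ν in Set.Ioi (0:ℝ), (2 / (π * l ^ 2)) * (ν ^ ((-1:ℝ) - 1) * Real.exp (-(c * ν ^ (-1:ℝ)))) := by
    refine setIntegral_congr_fun measurableSet_Ioi (fun ν hν => ?_)
    have hν : (0:ℝ) < ν := hν
    unfold invGammaPDF
    rw [Real.Gamma_one_half_eq]
    have e1 : (1 / ν) ^ ((1:ℝ)/2) = ν ^ (-(1:ℝ)/2) := by
      rw [one_div, ← Real.rpow_neg_one ν, ← Real.rpow_mul hν.le]
      norm_num
    have e2 : (l ^ 2) ^ (-(1:ℝ)/2 - 1) = l ^ (-3:ℝ) := by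
      rw [← Real.rpow_natCast l 2, ← Real.rpow_mul hl.le]
      norm_num
    have e3 : Real.exp (-(1/ν) / l ^ 2) * Real.exp (-1 / ν) = Real.exp (-(c * ν ^ (-1:ℝ))) := by
      rw [← Real.exp_add]
      congr 1
      rw [Real.rpow_neg_one, hc_def]
      field_simp
      ring
    have e4 : ν ^ (-(1:ℝ)/2) * ν ^ (-(1:ℝ)/2 - 1) = ν ^ ((-1:ℝ) - 1) := by
      rw [← Real.rpow_add hν]
      norm_num
    have e5 : (1:ℝ) ^ ((1:ℝ)/2) = 1 := Real.one_rpow _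
    have hl3 : l ^ (-3:ℝ) = (l ^ 2 * l)⁻¹ := by
      have h3 : l ^ (3:ℝ) = l ^ 2 * l := by
        rw [show (3:ℝ) = ((3:ℕ):ℝ) by norm_num, Real.rpow_natCast]; ring
      rw [show (-3:ℝ) = -(3:ℝ) by norm_num, Real.rpow_neg hl.le, h3]
    have : (2 * l * ((1 / ν) ^ ((1:ℝ)/2) / Real.sqrt π * (l ^ 2) ^ (-(1:ℝ)/2 - 1) *
        Real.exp (-(1/ν) / l ^ 2))) * ((1:ℝ) ^ ((1:ℝ)/2) / Real.sqrt π * ν ^ (-(1:ℝ)/2 - 1) *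
        Real.exp (-1 / ν))
        = (2 / (π * l ^ 2)) * (ν ^ ((-1:ℝ) - 1) * Real.exp (-(c * ν ^ (-1:ℝ)))) := by
      rw [e1, e2, e5, hl3, ← e3, ← e4]
      have hsq : Real.sqrt π * Real.sqrt π = π := Real.mul_self_sqrt hπ.le
      field_simp
      ring_nf
      try rw [Real.sq_sqrt hπ.le]
      try ring
    convert this using 3 <;> norm_num
  rw [key, MeasureTheory.integral_const_mul]
  have h1 : (∫ x in Set.Ioi (0:ℝ), (|(-1:ℝ)| * x ^ ((-1:ℝ) - 1)) • Real.exp (-(c * x ^ (-1:ℝ))))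
      = ∫ y in Set.Ioi (0:ℝ), Real.exp (-(c * y)) :=
    integral_comp_rpow_Ioi (fun u => Real.exp (-(c * u))) (by norm_num)
  simp only [abs_neg, abs_one, one_mul, smul_eq_mul] at h1
  rw [h1]
  have h2 := integral_comp_mul_left_Ioi (fun x => Real.exp (-x)) 0 hc
  simp only [mul_zero, smul_eq_mul] at h2
  rw [h2, integral_exp_neg_Ioi_zero, mul_one]
  rw [hc_def]
  field_simp
  ring
end
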